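/- arXiv:2103.13883 — 5 statements merged into one kernel-verified Lean document; each statement's English description precedes it below -/
import Mathlib

section
/- If ψ : [0,∞) → [0,∞) is a nontrivial sub-root function with positive fixed point r*, and C > 0, then C·ψ is sub-root and its positive fixed point r̃* satisfies r̃* ≤ max(C², 1) · r*. -/
/-!
Scaling preserves both defining monotonicity properties, so `C • ψ` is sub-root. For the
fixed point `r̃` of `C • ψ`, either `r̃ ≤ r*`, or `r̃ > r*` and then
`r̃ = C ψ(r̃) ≤ C √(r* r̃)`, which gives `r̃ ≤ C² r*` after squaring.
-/

open Real Set

structure IsSubRoot (ψ : ℝ → ℝ) : Prop where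
  nonneg : ∀ r, 0 ≤ r → 0 ≤ ψ r
  monotoneOn : MonotoneOn ψ (Ici 0)
  antitoneOn_div_sqrt : AntitoneOn (fun r => ψ r / √r) (Ioi 0)

theorem IsSubRoot.const_mul {ψ : ℝ → ℝ} (h : IsSubRoot ψ) {C : ℝ} (hC : 0 ≤ C) :
    IsSubRoot (fun r => C * ψ r) where
  nonneg r hr := mul_nonneg hC (h.nonneg r hr)
  monotoneOn _ ha _ hb hab := mul_le_mul_of_nonneg_left (h.monotoneOn ha hb hab) hC
  antitoneOn_div_sqrt a ha b hb hab := by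
    simp only [mul_div_assoc]
    exact mul_le_mul_of_nonneg_left (h.antitoneOn_div_sqrt ha hb hab) hC

theorem le_sqrt_mul_of_le_of_apply_eq_self {ψ : ℝ → ℝ}
    (hanti : AntitoneOn (fun r => ψ r / √r) (Ioi 0)) {rstar r : ℝ} (hrpos : 0 < rstar)
    (hfix : ψ rstar = rstar) (hr : rstar ≤ r) : ψ r ≤ √(rstar * r) := by
  have hsqrt_r : 0 < √r := sqrt_pos.mpr (hrpos.trans_le hr)
  have hslope : ψ r / √r ≤ √rstar := by
    calc ψ r / √r ≤ ψ rstar / √rstar := hanti hrpos (hrpos.trans_le hr) hr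
      _ = √rstar := by rw [hfix, div_sqrt]
  calc ψ r = ψ r / √r * √r := (div_mul_cancel₀ _ hsqrt_r.ne').symm
    _ ≤ √rstar * √r := mul_le_mul_of_nonneg_right hslope hsqrt_r.le
    _ = √(rstar * r) := (sqrt_mul hrpos.le r).symm

theorem le_sq_mul_of_le_mul_sqrt_mul {C rstar r : ℝ} (hrstar : 0 ≤ rstar) (hr : 0 < r)
    (h : r ≤ C * √(rstar * r)) : r ≤ C ^ 2 * rstar := by
  have hsq : r ^ 2 ≤ C ^ 2 * rstar * r := by
    calc r ^ 2 ≤ (C * √(rstar * r)) ^ 2 := pow_le_pow_left₀ hr.le h 2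
      _ = C ^ 2 * rstar * r := by
        rw [mul_pow, sq_sqrt (mul_nonneg hrstar hr.le), mul_assoc]
  nlinarith

theorem subroot_const_mul_general (ψ : ℝ → ℝ)
    (hnn : ∀ r, 0 ≤ r → 0 ≤ ψ r)
    (hmono : MonotoneOn ψ (Set.Ici 0))
    (hanti : AntitoneOn (fun r => ψ r / Real.sqrt r) (Set.Ioi 0))
    (rstar : ℝ) (hrpos : 0 < rstar) (hfix : ψ rstar = rstar)
    (C : ℝ) (hC : 0 < C) :
    (∀ r, 0 ≤ r → 0 ≤ C * ψ r) ∧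
    MonotoneOn (fun r => C * ψ r) (Set.Ici 0) ∧
    AntitoneOn (fun r => (C * ψ r) / Real.sqrt r) (Set.Ioi 0) ∧
    (∀ rt, 0 < rt → C * ψ rt = rt → rt ≤ max (C ^ 2) 1 * rstar) := by
  have hCψ := (IsSubRoot.mk hnn hmono hanti).const_mul hC.le
  refine ⟨hCψ.nonneg, hCψ.monotoneOn, hCψ.antitoneOn_div_sqrt, fun rt hrt hrt_fix => ?_⟩
  rcases le_total rt rstar with hle | hge
  · exact hle.trans (le_mul_of_one_le_left hrpos.le (le_max_right _ _))
  · have hbound : rt ≤ C * √(rstar * rt) := by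
      calc rt = C * ψ rt := hrt_fix.symm
        _ ≤ C * √(rstar * rt) := mul_le_mul_of_nonneg_left
            (le_sqrt_mul_of_le_of_apply_eq_self hanti hrpos hfix hge) hC.le
    exact (le_sq_mul_of_le_mul_sqrt_mul hrpos.le hrt hbound).trans
      (mul_le_mul_of_nonneg_right (le_max_left _ _) hrpos.le)

theorem subroot_const_mul (ψ : ℝ → ℝ)
    (hnn : ∀ r, 0 ≤ r → 0 ≤ ψ r)
    (hmono : MonotoneOn ψ (Set.Ici 0))
    (hanti : AntitoneOn (fun r => ψ r / Real.sqrt r) (Set.Ioi 0))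
    (hnontriv : ∃ r, 0 < r ∧ 0 < ψ r)
    (rstar : ℝ) (hrpos : 0 < rstar) (hfix : ψ rstar = rstar)
    (C : ℝ) (hC : 0 < C) :
    (∀ r, 0 ≤ r → 0 ≤ C * ψ r) ∧
    MonotoneOn (fun r => C * ψ r) (Set.Ici 0) ∧
    AntitoneOn (fun r => (C * ψ r) / Real.sqrt r) (Set.Ioi 0) ∧
    (∀ rt, 0 < rt → C * ψ rt = rt → rt ≤ max (C ^ 2) 1 * rstar) :=
  subroot_const_mul_general ψ hnn hmono hanti rstar hrpos hfix C hC
end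

section
/- If ψ : [0,∞) → [0,∞) is a nontrivial sub-root function with positive fixed point r*, and Δr > 0, then r ↦ ψ(r + Δr) is sub-root and its positive fixed point r̃* satisfies r̃* ≤ r* + √(r*·Δr). -/
theorem subroot_shift (ψ : ℝ → ℝ)
    (hnn : ∀ r, 0 ≤ r → 0 ≤ ψ r)
    (hmono : MonotoneOn ψ (Set.Ici 0))
    (hanti : AntitoneOn (fun r => ψ r / Real.sqrt r) (Set.Ioi 0))
    (hnontriv : ∃ r, 0 < r ∧ 0 < ψ r)
    (rstar : ℝ) (hrpos : 0 < rstar) (hfix : ψ rstar = rstar)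
    (Δr : ℝ) (hΔ : 0 < Δr) :
    (∀ r, 0 ≤ r → 0 ≤ ψ (r + Δr)) ∧
    MonotoneOn (fun r => ψ (r + Δr)) (Set.Ici 0) ∧
    AntitoneOn (fun r => ψ (r + Δr) / Real.sqrt r) (Set.Ioi 0) ∧
    (∀ rt, 0 < rt → ψ (rt + Δr) = rt → rt ≤ rstar + Real.sqrt (rstar * Δr)) := by
  refine ⟨fun r hr => hnn _ (by linarith), ?_, ?_, ?_⟩
  · intro a ha b hb hab
    exact hmono (by simp [Set.mem_Ici] at ha ⊢; linarith)
      (by simp [Set.mem_Ici] at hb ⊢; linarith) (by linarith)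
  · intro a ha b hb hab
    simp only [Set.mem_Ioi] at ha hb
    have haΔ : (0:ℝ) < a + Δr := by linarith
    have hbΔ : (0:ℝ) < b + Δr := by linarith
    have h1 : ψ (b + Δr) / Real.sqrt (b + Δr) ≤ ψ (a + Δr) / Real.sqrt (a + Δr) :=
      hanti (Set.mem_Ioi.mpr haΔ) (Set.mem_Ioi.mpr hbΔ) (by linarith)
    have hsa := Real.sqrt_pos.mpr ha
    have hsb := Real.sqrt_pos.mpr hb
    have hsaΔ := Real.sqrt_pos.mpr haΔ
    have hsbΔ := Real.sqrt_pos.mpr hbΔ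
    have h1' : ψ (b + Δr) * Real.sqrt (a + Δr) ≤ ψ (a + Δr) * Real.sqrt (b + Δr) :=
      (div_le_div_iff₀ hsbΔ hsaΔ).mp h1
    have h2 : Real.sqrt (b + Δr) * Real.sqrt a ≤ Real.sqrt (a + Δr) * Real.sqrt b := by
      rw [← Real.sqrt_mul (by linarith), ← Real.sqrt_mul (by linarith)]
      exact Real.sqrt_le_sqrt (by nlinarith)
    have hψb : 0 ≤ ψ (b + Δr) := hnn _ (by linarith)
    simp only
    rw [div_le_div_iff₀ hsb hsa]
    nlinarith [hsb.le, hsaΔ.le, hψb]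
  · intro rt hrt hfixt
    have hT : 0 ≤ Real.sqrt (rstar * Δr) := Real.sqrt_nonneg _
    rcases le_or_gt rt rstar with h | h
    · linarith
    · have hrtΔ : (0:ℝ) < rt + Δr := by linarith
      have h1 : ψ (rt + Δr) / Real.sqrt (rt + Δr) ≤ ψ rstar / Real.sqrt rstar :=
        hanti (Set.mem_Ioi.mpr hrpos) (Set.mem_Ioi.mpr hrtΔ) (by linarith)
      rw [hfix, Real.div_sqrt, hfixt] at h1
      have h2 : rt ≤ Real.sqrt rstar * Real.sqrt (rt + Δr) := by
        rw [div_le_iff₀ (Real.sqrt_pos.mpr hrtΔ)] at h1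
        linarith
      have hs1 : Real.sqrt rstar ^ 2 = rstar := Real.sq_sqrt hrpos.le
      have hs2 : Real.sqrt (rt + Δr) ^ 2 = rt + Δr := Real.sq_sqrt hrtΔ.le
      have h3 : rt ^ 2 ≤ rstar * (rt + Δr) := by nlinarith [Real.sqrt_nonneg rstar, Real.sqrt_nonneg (rt + Δr)]
      have hT2 : Real.sqrt (rstar * Δr) ^ 2 = rstar * Δr := Real.sq_sqrt (by positivity)
      by_contra hc
      push_neg at hc
      nlinarith [hT, hrpos, hΔ]
end

section
/- If ψ₁,…,ψₙ : [0,∞) → [0,∞) are nontrivial sub-root functions with positive fixed points r₁*,…,rₙ*, then ψ := Σᵢ ψᵢ is sub-root and its positive fixed point r̃* satisfies r̃* ≤ (Σᵢ √rᵢ*)². -/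
theorem subroot_sum (n : ℕ) (ψ : Fin n → ℝ → ℝ) (rstar : Fin n → ℝ)
    (hnn : ∀ i r, 0 ≤ r → 0 ≤ ψ i r)
    (hmono : ∀ i, MonotoneOn (ψ i) (Set.Ici 0))
    (hanti : ∀ i, AntitoneOn (fun r => ψ i r / Real.sqrt r) (Set.Ioi 0))
    (hnontriv : ∀ i, ∃ r, 0 < r ∧ 0 < ψ i r)
    (hrpos : ∀ i, 0 < rstar i) (hfix : ∀ i, ψ i (rstar i) = rstar i) :
    (∀ r, 0 ≤ r → 0 ≤ ∑ i, ψ i r) ∧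
    MonotoneOn (fun r => ∑ i, ψ i r) (Set.Ici 0) ∧
    AntitoneOn (fun r => (∑ i, ψ i r) / Real.sqrt r) (Set.Ioi 0) ∧
    (∀ rt, 0 < rt → (∑ i, ψ i rt) = rt → rt ≤ (∑ i, Real.sqrt (rstar i)) ^ 2) := by
  refine ⟨fun r hr => Finset.sum_nonneg fun i _ => hnn i r hr,
    fun a ha b hb hab => Finset.sum_le_sum fun i _ => hmono i ha hb hab,
    fun a ha b hb hab => by
      simp only [Finset.sum_div]
      exact Finset.sum_le_sum fun i _ => hanti i ha hb hab,
    ?_⟩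
  intro rt hrt hfixt
  by_contra h
  push_neg at h
  set S := ∑ i, Real.sqrt (rstar i) with hS
  have hSnn : 0 ≤ S := Finset.sum_nonneg fun i _ => Real.sqrt_nonneg _
  have hkey : ∀ i, ψ i rt ≤ Real.sqrt (rstar i) * Real.sqrt rt := by
    intro i
    have hri : rstar i ≤ S ^ 2 := by
      have h1 : Real.sqrt (rstar i) ≤ S :=
        Finset.single_le_sum (fun j _ => Real.sqrt_nonneg _) (Finset.mem_univ i)
      calc rstar i = Real.sqrt (rstar i) ^ 2 := (Real.sq_sqrt (hrpos i).le).symm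
        _ ≤ S ^ 2 := pow_le_pow_left₀ (Real.sqrt_nonneg _) h1 2
    have hle : rstar i ≤ rt := hri.trans h.le
    have hthis := hanti i (Set.mem_Ioi.mpr (hrpos i)) (Set.mem_Ioi.mpr hrt) hle
    simp only at hthis
    rw [hfix i, Real.div_sqrt] at hthis
    have hst : 0 < Real.sqrt rt := Real.sqrt_pos.mpr hrt
    calc ψ i rt = ψ i rt / Real.sqrt rt * Real.sqrt rt := by field_simp
      _ ≤ Real.sqrt (rstar i) * Real.sqrt rt :=
        mul_le_mul_of_nonneg_right hthis hst.le
  have hsum : rt ≤ S * Real.sqrt rt := by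
    calc rt = ∑ i, ψ i rt := hfixt.symm
      _ ≤ ∑ i, Real.sqrt (rstar i) * Real.sqrt rt :=
        Finset.sum_le_sum fun i _ => hkey i
      _ = S * Real.sqrt rt := by rw [Finset.sum_mul]
  have hsq : Real.sqrt rt ≤ S := by
    have hst : 0 < Real.sqrt rt := Real.sqrt_pos.mpr hrt
    have h2 : Real.sqrt rt * Real.sqrt rt ≤ S * Real.sqrt rt := by
      rwa [Real.mul_self_sqrt hrt.le]
    exact le_of_mul_le_mul_right h2 hst
  have hfin : rt ≤ S ^ 2 :=
    calc rt = Real.sqrt rt ^ 2 := (Real.sq_sqrt hrt.le).symm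
      _ ≤ S ^ 2 := pow_le_pow_left₀ (Real.sqrt_nonneg _) hsq 2
  exact absurd hfin (not_le.mpr h)
end

section
/- A nontrivial sub-root function ψ : [0,∞) → [0,∞) is continuous on (0,∞) and the equation ψ(r) = r has a unique positive solution r*; moreover for all r > 0, r ≥ ψ(r) if and only if r ≥ r*. -/
/-! Write `ψ r = g r * √r` with `g` antitone. Monotonicity of `ψ` and antitonicity of `g` squeeze
`ψ r` between `ψ x` and `ψ x * √r / √x`, which gives continuity. Nontriviality forces `ψ > 0` on
`(0, ∞)`, so `ψ r / r = g r / √r` is strictly decreasing there; it is `≥ 1` near `0` and `≤ 1` far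
out, so it crosses `1` exactly once, and `ψ r ≤ r` holds exactly to the right of the crossing. -/

open Real Set Filter Topology

lemma sqrt_le_div_sqrt_iff {r y : ℝ} (hr : 0 < r) : √r ≤ y / √r ↔ r ≤ y := by
  rw [le_div_iff₀ (sqrt_pos.2 hr), mul_self_sqrt hr.le]

lemma div_sqrt_le_sqrt_iff {r y : ℝ} (hr : 0 < r) : y / √r ≤ √r ↔ y ≤ r := by
  rw [div_le_iff₀ (sqrt_pos.2 hr), mul_self_sqrt hr.le]

namespace SubRoot

variable {ψ : ℝ → ℝ}

lemma mul_sqrt_le_mul_sqrt (hanti : AntitoneOn (fun r => ψ r / √r) (Ioi 0)) {s r : ℝ}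
    (hs : 0 < s) (hsr : s ≤ r) : ψ r * √s ≤ ψ s * √r := by
  have hr : 0 < r := hs.trans_le hsr
  rw [← div_le_div_iff₀ (sqrt_pos.2 hr) (sqrt_pos.2 hs)]
  exact hanti hs hr hsr

lemma sqrt_mul_abs_sub_le (hmono : MonotoneOn ψ (Ioi 0))
    (hanti : AntitoneOn (fun r => ψ r / √r) (Ioi 0)) {x r : ℝ} (hx : 0 < x) (hr : 0 < r) :
    √x * |ψ r - ψ x| ≤ |ψ x| * |√r - √x| := by
  rw [← abs_mul]
  rcases le_total r x with hrx | hxr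
  · have hψ : ψ r ≤ ψ x := hmono hr hx hrx
    have hcross := mul_sqrt_le_mul_sqrt hanti hr hrx
    rw [abs_of_nonpos (sub_nonpos.2 hψ)]
    nlinarith [neg_abs_le (ψ x * (√r - √x))]
  · have hψ : ψ x ≤ ψ r := hmono hx hr hxr
    have hcross := mul_sqrt_le_mul_sqrt hanti hx hxr
    rw [abs_of_nonneg (sub_nonneg.2 hψ)]
    nlinarith [le_abs_self (ψ x * (√r - √x))]

lemma continuousOn_Ioi (hmono : MonotoneOn ψ (Ioi 0))
    (hanti : AntitoneOn (fun r => ψ r / √r) (Ioi 0)) : ContinuousOn ψ (Ioi 0) := by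
  intro x hx
  have hbound : ∀ᶠ r in 𝓝[Ioi 0] x, ‖ψ r - ψ x‖ ≤ |ψ x| * |√r - √x| / √x :=
    eventually_nhdsWithin_of_forall fun r hr => by
      rw [Real.norm_eq_abs, le_div_iff₀ (sqrt_pos.2 hx), mul_comm]
      exact sqrt_mul_abs_sub_le hmono hanti hx hr
  have hlim : Tendsto (fun r => |ψ x| * |√r - √x| / √x) (𝓝[Ioi 0] x) (𝓝 0) := by
    have hc : Continuous fun r => |ψ x| * |√r - √x| / √x := by fun_prop
    simpa using (hc.tendsto x).mono_left nhdsWithin_le_nhds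
  exact tendsto_iff_norm_sub_tendsto_zero.2 <|
    squeeze_zero' (Eventually.of_forall fun _ => norm_nonneg _) hbound hlim

lemma apply_pos (hmono : MonotoneOn ψ (Ioi 0))
    (hanti : AntitoneOn (fun r => ψ r / √r) (Ioi 0)) {r₀ : ℝ} (hr₀ : 0 < r₀) (hψr₀ : 0 < ψ r₀)
    {r : ℝ} (hr : 0 < r) : 0 < ψ r := by
  rcases le_total r₀ r with hle | hle
  · exact hψr₀.trans_le (hmono hr₀ hr hle)
  · have hcross := mul_sqrt_le_mul_sqrt hanti hr hle
    have : 0 < ψ r * √r₀ := (mul_pos hψr₀ (sqrt_pos.2 hr)).trans_le hcross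
    exact pos_of_mul_pos_left this (sqrt_nonneg r₀)

lemma strictAntiOn_div_self (hanti : AntitoneOn (fun r => ψ r / √r) (Ioi 0))
    (hpos : ∀ r, 0 < r → 0 < ψ r) : StrictAntiOn (fun r => ψ r / r) (Ioi 0) := by
  intro s (hs : 0 < s) r (hr : 0 < r) hsr
  have hsplit : ∀ t, 0 ≤ t → ψ t / t = ψ t / √t / √t := fun t ht => by
    rw [div_div, mul_self_sqrt ht]
  show ψ r / r < ψ s / s
  rw [hsplit r hr.le, hsplit s hs.le]
  calc ψ r / √r / √r ≤ ψ s / √s / √r :=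
        div_le_div_of_nonneg_right (hanti hs hr hsr.le) (sqrt_nonneg r)
    _ < ψ s / √s / √s := div_lt_div_of_pos_left (div_pos (hpos s hs) (sqrt_pos.2 hs))
        (sqrt_pos.2 hs) (sqrt_lt_sqrt hs.le hsr)

lemma exists_le_apply (hanti : AntitoneOn (fun r => ψ r / √r) (Ioi 0)) {r₀ : ℝ} (hr₀ : 0 < r₀)
    (hψr₀ : 0 < ψ r₀) : ∃ a, 0 < a ∧ a ≤ ψ a := by
  set c := ψ r₀ / √r₀
  have hc : 0 < c := div_pos hψr₀ (sqrt_pos.2 hr₀)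
  have ha : 0 < min r₀ (c ^ 2) := lt_min hr₀ (by positivity)
  refine ⟨min r₀ (c ^ 2), ha, (sqrt_le_div_sqrt_iff ha).1 ?_⟩
  calc √(min r₀ (c ^ 2)) ≤ √(c ^ 2) := sqrt_le_sqrt (min_le_right _ _)
    _ = c := sqrt_sq hc.le
    _ ≤ _ := hanti ha hr₀ (min_le_left _ _)

lemma exists_apply_le (hanti : AntitoneOn (fun r => ψ r / √r) (Ioi 0)) {r₀ : ℝ} (hr₀ : 0 < r₀) :
    ∃ b, 0 < b ∧ ψ b ≤ b := by
  set c := ψ r₀ / √r₀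
  have hb : 0 < max r₀ (c ^ 2) := lt_max_of_lt_left hr₀
  refine ⟨max r₀ (c ^ 2), hb, (div_sqrt_le_sqrt_iff hb).1 ?_⟩
  calc _ ≤ c := hanti hr₀ hb (le_max_left _ _)
    _ ≤ |c| := le_abs_self c
    _ = √(c ^ 2) := (sqrt_sq_eq_abs c).symm
    _ ≤ √(max r₀ (c ^ 2)) := sqrt_le_sqrt (le_max_right _ _)

lemma apply_le_self_iff (hanti : AntitoneOn (fun r => ψ r / √r) (Ioi 0))
    (hpos : ∀ r, 0 < r → 0 < ψ r) {r₀ : ℝ} (hr₀ : 0 < r₀) (hfix : ψ r₀ = r₀) {r : ℝ}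
    (hr : 0 < r) : ψ r ≤ r ↔ r₀ ≤ r :=
  calc ψ r ≤ r ↔ ψ r / r ≤ ψ r₀ / r₀ := by rw [hfix, div_self hr₀.ne', div_le_one hr]
    _ ↔ r₀ ≤ r := (strictAntiOn_div_self hanti hpos).le_iff_ge hr hr₀

end SubRoot

open SubRoot in
theorem subroot_fixed_point_general (ψ : ℝ → ℝ)
    (hmono : MonotoneOn ψ (Set.Ici 0))
    (hanti : AntitoneOn (fun r => ψ r / Real.sqrt r) (Set.Ioi 0))
    (hnontriv : ∃ r, 0 < r ∧ 0 < ψ r) :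
    ContinuousOn ψ (Set.Ioi 0) ∧
    ∃ rstar : ℝ, 0 < rstar ∧ ψ rstar = rstar ∧
      (∀ r, 0 < r → ψ r = r → r = rstar) ∧
      (∀ r, 0 < r → (ψ r ≤ r ↔ rstar ≤ r)) := by
  have hmono' : MonotoneOn ψ (Ioi 0) := hmono.mono Ioi_subset_Ici_self
  have hcont := continuousOn_Ioi hmono' hanti
  obtain ⟨r₀, hr₀, hψr₀⟩ := hnontriv
  have hpos : ∀ r, 0 < r → 0 < ψ r := fun r hr => apply_pos hmono' hanti hr₀ hψr₀ hr
  obtain ⟨a, ha, hψa⟩ := exists_le_apply hanti hr₀ hψr₀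
  obtain ⟨b, hb, hψb⟩ := exists_apply_le hanti hr₀
  obtain ⟨rstar, hrstar, hfix⟩ : ∃ r ∈ Ioi 0, ψ r - r = 0 :=
    isPreconnected_Ioi.intermediate_value hb ha (hcont.sub continuousOn_id)
      ⟨sub_nonpos.2 hψb, sub_nonneg.2 hψa⟩
  rw [sub_eq_zero] at hfix
  have hchar : ∀ r, 0 < r → (ψ r ≤ r ↔ rstar ≤ r) := fun r hr =>
    apply_le_self_iff hanti hpos hrstar hfix hr
  refine ⟨hcont, rstar, hrstar, hfix, fun r hr hr_fix => le_antisymm ?_ ?_, hchar⟩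
  · exact (apply_le_self_iff hanti hpos hr hr_fix hrstar).1 hfix.le
  · exact (hchar r hr).1 hr_fix.le

theorem subroot_fixed_point (ψ : ℝ → ℝ)
    (hnn : ∀ r, 0 ≤ r → 0 ≤ ψ r)
    (hmono : MonotoneOn ψ (Set.Ici 0))
    (hanti : AntitoneOn (fun r => ψ r / Real.sqrt r) (Set.Ioi 0))
    (hnontriv : ∃ r, 0 < r ∧ 0 < ψ r) :
    ContinuousOn ψ (Set.Ioi 0) ∧
    ∃ rstar : ℝ, 0 < rstar ∧ ψ rstar = rstar ∧
      (∀ r, 0 < r → ψ r = r → r = rstar) ∧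
      (∀ r, 0 < r → (ψ r ≤ r ↔ rstar ≤ r)) :=
  subroot_fixed_point_general ψ hmono hanti hnontriv
end

section
/- Let F be a finite class of measurable functions with values in [0,D], f° ∈ F an anchor, and ρ a distribution. Then the local Rademacher complexity satisfies R_n^ρ({f ∈ F : ‖f − f°‖²_ρ ≤ r}) ≤ 2·max(√(r log|F|/n), D log|F|/n), and the right-hand side, as a function of r, is sub-root with positive fixed point r* = 2·max(D,2)·log|F|/n. -/
/-!
Write `g_f = f - f°` and `R` for the Rademacher average. Shifting the class by the anchor does
not change `R`, because the signs are centred. For `0 < λ ≤ n / D`, Jensen's inequality and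
`max ≤ sum` give `exp (λ R) ≤ ∑_f E exp ((λ / n) ∑ᵢ σᵢ g_f(Xᵢ))`, the sum running over the `f`
with `‖g_f‖² ≤ r`. The pairs `(σᵢ, Xᵢ)` are independent, and `cosh t ≤ 1 + t²` for `|t| ≤ 1`
bounds each term by `exp (λ² r / n)`. Hence `R ≤ log |F| / λ + λ r / n`, and the choice
`λ = √(n log |F| / r)` or `λ = n / D`, whichever is admissible, gives the bound.
-/

open MeasureTheory Real Finset Filter Topology

lemma Real.cosh_le_one_add_sq {t : ℝ} (ht : |t| ≤ 1) : cosh t ≤ 1 + t ^ 2 := by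
  have hpos := (abs_le.1 (abs_exp_sub_one_sub_id_le ht)).2
  have hneg := (abs_le.1 (abs_exp_sub_one_sub_id_le (x := -t) (by rwa [abs_neg]))).2
  rw [neg_sq] at hneg
  rw [cosh_eq]
  linarith

def boolSign (b : Bool) : ℝ := if b then 1 else -1

@[simp] lemma boolSign_true : boolSign true = 1 := rfl
@[simp] lemma boolSign_false : boolSign false = -1 := rfl

lemma boolSign_not (b : Bool) : boolSign (!b) = -boolSign b := by cases b <;> simp

lemma sum_sum_boolSign_mul_eq_zero {κ : Type*} [Fintype κ] [DecidableEq κ] (a : κ → ℝ) :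
    ∑ σ : κ → Bool, ∑ k, boolSign (σ k) * a k = 0 := by
  -- flipping all signs permutes the sign vectors and negates the sum
  have h := (Equiv.piCongrRight fun _ : κ => Equiv.boolNot).sum_comp
    fun σ => ∑ k, boolSign (σ k) * a k
  simp only [Equiv.piCongrRight_apply, Equiv.boolNot, Function.Involutive.coe_toPerm,
    Pi.map_apply, boolSign_not, neg_mul, sum_neg_distrib] at h
  linarith

lemma exp_mul_sum_boolSign_mul {κ 𝒳 : Type*} [Fintype κ] (t : ℝ) (σ : κ → Bool) (g : 𝒳 → ℝ)
    (X : κ → 𝒳) :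
    exp (t * ∑ k, boolSign (σ k) * g (X k)) = ∏ k, exp (t * boolSign (σ k) * g (X k)) := by
  simp only [mul_sum, exp_sum, mul_assoc]

section

variable {𝒳 ι : Type*}

noncomputable def empiricalRademacher (s : Finset ι) (hs : s.Nonempty) (g : ι → 𝒳 → ℝ) {n : ℕ}
    (X : Fin n → 𝒳) : ℝ :=
  (1 / 2 ^ n : ℝ) * ∑ σ : Fin n → Bool,
    s.sup' hs fun i => (1 / n : ℝ) * ∑ k, boolSign (σ k) * g i (X k)

lemma empiricalRademacher_sub (s : Finset ι) (hs : s.Nonempty) (g : ι → 𝒳 → ℝ) (f₀ : 𝒳 → ℝ)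
    {n : ℕ} (X : Fin n → 𝒳) :
    empiricalRademacher s hs (fun i x => g i x - f₀ x) X = empiricalRademacher s hs g X := by
  have hshift : ∀ σ : Fin n → Bool,
      (s.sup' hs fun i => (1 / n : ℝ) * ∑ k, boolSign (σ k) * (g i (X k) - f₀ (X k)))
        = (s.sup' hs fun i => (1 / n : ℝ) * ∑ k, boolSign (σ k) * g i (X k))
          - (1 / n : ℝ) * ∑ k, boolSign (σ k) * f₀ (X k) := fun σ => by
    simp only [sub_eq_add_neg, Finset.sup'_add, mul_add, sum_add_distrib, mul_neg, sum_neg_distrib]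
  simp only [empiricalRademacher, hshift, sum_sub_distrib, ← mul_sum,
    sum_sum_boolSign_mul_eq_zero, mul_zero, sub_zero]

end

lemma exp_mul_sum_mul_sup'_le {S ι : Type*} [Fintype S] {w : S → ℝ} (hw₀ : ∀ σ, 0 ≤ w σ)
    (hw₁ : ∑ σ, w σ = 1) (s : Finset ι) (hs : s.Nonempty) (y : ι → S → ℝ) (l : ℝ) :
    exp (l * ∑ σ, w σ * s.sup' hs (y · σ)) ≤ ∑ σ, w σ * ∑ i ∈ s, exp (l * y i σ) := by
  have hmax : ∀ σ, exp (l * s.sup' hs (y · σ)) ≤ ∑ i ∈ s, exp (l * y i σ) := fun σ => by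
    obtain ⟨j, hj, hje⟩ := s.exists_mem_eq_sup' hs (y · σ)
    rw [hje]
    exact single_le_sum (f := fun i => exp (l * y i σ)) (fun _ _ => (exp_pos _).le) hj
  calc exp (l * ∑ σ, w σ * s.sup' hs (y · σ))
      = exp (∑ σ, w σ • (l * s.sup' hs (y · σ))) := by
        simp only [mul_sum, smul_eq_mul, mul_left_comm]
    _ ≤ ∑ σ, w σ • exp (l * s.sup' hs (y · σ)) :=
        convexOn_exp.map_sum_le (fun σ _ => hw₀ σ) hw₁ fun _ _ => Set.mem_univ _
    _ ≤ ∑ σ, w σ * ∑ i ∈ s, exp (l * y i σ) := by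
        gcongr with σ
        exact mul_le_mul_of_nonneg_left (hmax σ) (hw₀ σ)

section

variable {Ω 𝒳 : Type*} [MeasurableSpace Ω] [MeasurableSpace 𝒳]

lemma integrable_of_abs_le {μ : Measure Ω} [IsFiniteMeasure μ] {f : Ω → ℝ} (hf : Measurable f)
    {C : ℝ} (hC : ∀ x, |f x| ≤ C) : Integrable f μ :=
  .of_bound hf.aestronglyMeasurable C (ae_of_all _ hC)

lemma integrable_exp_mul_of_abs_le {μ : Measure Ω} [IsFiniteMeasure μ] {g : Ω → ℝ}
    (hg : Measurable g) {D : ℝ} (hD : ∀ x, |g x| ≤ D) (c : ℝ) :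
    Integrable (fun x => exp (c * g x)) μ := by
  refine integrable_of_abs_le (C := exp (|c| * D)) (hg.const_mul c).exp fun x => ?_
  rw [abs_exp, exp_le_exp]
  exact (le_abs_self _).trans ((abs_mul c _).trans_le (by gcongr; exact hD x))

lemma integrable_finset_sup' {μ : Measure Ω} {ι : Type*} {s : Finset ι} (hs : s.Nonempty)
    {Y : ι → Ω → ℝ} (hY : ∀ i ∈ s, Integrable (Y i) μ) :
    Integrable (fun ω => s.sup' hs (Y · ω)) μ := by
  convert Finset.sup'_induction hs Y (p := (Integrable · μ)) (fun _ h₁ _ h₂ => h₁.sup h₂) hY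
    using 1
  ext ω
  exact (Finset.sup'_apply hs Y ω).symm

/-- Massart's maximal inequality, for a weighted average of maxima. -/
lemma exp_mul_integral_sum_mul_sup'_le {μ : Measure Ω} [IsProbabilityMeasure μ] {S ι : Type*}
    [Fintype S] {w : S → ℝ} (hw₀ : ∀ σ, 0 ≤ w σ) (hw₁ : ∑ σ, w σ = 1) (s : Finset ι)
    (hs : s.Nonempty) {Y : ι → S → Ω → ℝ} (hY : ∀ i ∈ s, ∀ σ, Integrable (Y i σ) μ) {l : ℝ}
    (hexp : ∀ i ∈ s, ∀ σ, Integrable (fun ω => exp (l * Y i σ ω)) μ) :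
    exp (l * ∫ ω, ∑ σ, w σ * s.sup' hs (Y · σ ω) ∂μ)
      ≤ ∑ i ∈ s, ∑ σ, w σ * ∫ ω, exp (l * Y i σ ω) ∂μ := by
  set Φ := fun ω => ∑ σ, w σ * s.sup' hs (Y · σ ω)
  have hΦ : Integrable Φ μ :=
    integrable_finsetSum _ fun σ _ => (integrable_finset_sup' hs fun i hi => hY i hi σ).const_mul _
  have hbound : Integrable (fun ω => ∑ σ, w σ * ∑ i ∈ s, exp (l * Y i σ ω)) μ :=
    integrable_finsetSum _ fun σ _ =>
      (integrable_finsetSum _ fun i hi => hexp i hi σ).const_mul _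
  have hpointwise := fun ω => exp_mul_sum_mul_sup'_le hw₀ hw₁ s hs (fun i σ => Y i σ ω) l
  calc exp (l * ∫ ω, Φ ω ∂μ) = exp (∫ ω, l * Φ ω ∂μ) := by rw [integral_const_mul]
    _ ≤ ∫ ω, exp (l * Φ ω) ∂μ :=
        convexOn_exp.map_integral_le continuous_exp.continuousOn isClosed_univ
          (ae_of_all _ fun _ => Set.mem_univ _) (hΦ.const_mul l)
          (hbound.mono' (continuous_exp.comp_aestronglyMeasurable
            (hΦ.const_mul l).aestronglyMeasurable)
            (ae_of_all _ fun ω => by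
              rw [Function.comp_apply, norm_of_nonneg (exp_pos _).le]; exact hpointwise ω))
    _ ≤ ∫ ω, ∑ σ, w σ * ∑ i ∈ s, exp (l * Y i σ ω) ∂μ := by
        refine integral_mono_of_nonneg (ae_of_all _ fun _ => (exp_pos _).le) hbound
          (ae_of_all _ hpointwise)
    _ = ∑ i ∈ s, ∑ σ, w σ * ∫ ω, exp (l * Y i σ ω) ∂μ := by
        rw [integral_finsetSum _ fun σ _ =>
          (integrable_finsetSum _ fun i hi => hexp i hi σ).const_mul _, sum_comm]
        refine sum_congr rfl fun σ _ => ?_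
        rw [integral_const_mul, integral_finsetSum _ fun i hi => hexp i hi σ, mul_sum]

lemma sum_integral_exp_mul_sum_boolSign_mul (ρ : Measure 𝒳) [SigmaFinite ρ] (n : ℕ)
    {g : 𝒳 → ℝ} (t : ℝ) (hg : ∀ c, Integrable (fun x => exp (c * g x)) ρ) :
    ∑ σ : Fin n → Bool, ∫ X, exp (t * ∑ k, boolSign (σ k) * g (X k)) ∂(Measure.pi fun _ => ρ)
      = (2 * ∫ x, cosh (t * g x) ∂ρ) ^ n := by
  have hsigns : ∑ b, ∫ x, exp (t * boolSign b * g x) ∂ρ = 2 * ∫ x, cosh (t * g x) ∂ρ := by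
    simp only [Fintype.sum_bool, boolSign_true, boolSign_false, mul_one, mul_neg_one, cosh_eq,
      integral_div, neg_mul, ← integral_add (hg t) (by simpa using hg (-t))]
    ring
  rw [← hsigns, Fintype.sum_pow]
  refine sum_congr rfl fun σ _ => ?_
  simp_rw [exp_mul_sum_boolSign_mul]
  exact integral_fintype_prod_eq_prod fun k x => exp (t * boolSign (σ k) * g x)

lemma integral_cosh_mul_le_exp (ρ : Measure 𝒳) [IsProbabilityMeasure ρ] {g : 𝒳 → ℝ}
    (hg : Measurable g) {t D r : ℝ} (hD : ∀ x, |g x| ≤ D) (htD : |t| * D ≤ 1)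
    (hr : ∫ x, g x ^ 2 ∂ρ ≤ r) :
    ∫ x, cosh (t * g x) ∂ρ ≤ exp (t ^ 2 * r) := by
  have htg : ∀ x, |t * g x| ≤ 1 := fun x =>
    (abs_mul t _).trans_le ((mul_le_mul_of_nonneg_left (hD x) (abs_nonneg t)).trans htD)
  have hcosh : ∀ x, cosh (t * g x) ≤ 1 + (t * g x) ^ 2 := fun x => cosh_le_one_add_sq (htg x)
  have hsq : Integrable (fun x => g x ^ 2) ρ :=
    integrable_of_abs_le (hg.pow_const 2) (C := D ^ 2) fun x => by
      rw [abs_pow]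
      exact pow_le_pow_left₀ (abs_nonneg _) (hD x) 2
  calc ∫ x, cosh (t * g x) ∂ρ ≤ ∫ x, 1 + t ^ 2 * g x ^ 2 ∂ρ :=
        integral_mono (integrable_of_abs_le (hg.const_mul t).cosh (C := 2) fun x => by
            rw [abs_of_pos (cosh_pos _)]
            linarith [hcosh x, (sq_le_one_iff_abs_le_one _).2 (htg x)])
          ((integrable_const 1).add (hsq.const_mul _)) fun x => (hcosh x).trans_eq (by ring)
    _ = 1 + t ^ 2 * ∫ x, g x ^ 2 ∂ρ := by
        rw [integral_add (integrable_const 1) (hsq.const_mul _), integral_const_mul]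
        simp
    _ ≤ 1 + t ^ 2 * r := by gcongr
    _ ≤ exp (t ^ 2 * r) := by linarith [add_one_le_exp (t ^ 2 * r)]

lemma sum_integral_exp_mul_rademacher_le (ρ : Measure 𝒳) [IsProbabilityMeasure ρ]
    {g : 𝒳 → ℝ} (hg : Measurable g) {D r : ℝ} (hD : ∀ x, |g x| ≤ D) (hr : ∫ x, g x ^ 2 ∂ρ ≤ r)
    {n : ℕ} (hn : 0 < n) {l : ℝ} (hlD : |l| * D ≤ n) :
    ∑ σ : Fin n → Bool, (1 / 2 ^ n : ℝ) *
        ∫ X, exp (l * ((1 / n : ℝ) * ∑ k, boolSign (σ k) * g (X k))) ∂(Measure.pi fun _ => ρ)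
      ≤ exp (l ^ 2 * r / n) := by
  have hn' : (0 : ℝ) < n := Nat.cast_pos.2 hn
  have hlD' : |l / n| * D ≤ 1 := by
    rwa [abs_div, Nat.abs_cast, div_mul_eq_mul_div, div_le_one hn']
  have hl : ∀ S : ℝ, l * ((1 / n : ℝ) * S) = l / n * S := fun S => by ring
  calc _ = (∫ x, cosh (l / n * g x) ∂ρ) ^ n := by
        simp only [← mul_sum, hl,
          sum_integral_exp_mul_sum_boolSign_mul ρ n _ (integrable_exp_mul_of_abs_le hg hD), mul_pow]
        field_simp
    _ ≤ exp ((l / n) ^ 2 * r) ^ n := by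
        gcongr
        exact integral_cosh_mul_le_exp ρ hg hD hlD' hr
    _ = exp (l ^ 2 * r / n) := by
        rw [← exp_nat_mul]
        field_simp

theorem integral_empiricalRademacher_le {ι : Type*} (ρ : Measure 𝒳) [IsProbabilityMeasure ρ]
    (s : Finset ι) (hs : s.Nonempty) {g : ι → 𝒳 → ℝ} {D r : ℝ}
    (hmeas : ∀ i ∈ s, Measurable (g i)) (hD : ∀ i ∈ s, ∀ x, |g i x| ≤ D)
    (hr : ∀ i ∈ s, ∫ x, g i x ^ 2 ∂ρ ≤ r) {n : ℕ} (hn : 0 < n) {l : ℝ} (hl : 0 < l)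
    (hlD : l * D ≤ n) :
    ∫ X : Fin n → 𝒳, empiricalRademacher s hs g X ∂(Measure.pi fun _ => ρ)
      ≤ log s.card / l + l * r / n := by
  set Y : ι → (Fin n → Bool) → (Fin n → 𝒳) → ℝ :=
    fun i σ X => (1 / n : ℝ) * ∑ k, boolSign (σ k) * g i (X k)
  have hlY : ∀ i σ X, l * Y i σ X = l / n * ∑ k, boolSign (σ k) * g i (X k) := by
    intro i σ X; simp only [Y]; ring
  have hY : ∀ i ∈ s, ∀ σ, Integrable (Y i σ) (Measure.pi fun _ => ρ) := fun i hi σ =>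
    (integrable_finsetSum _ fun k _ => (integrable_comp_eval (i := k)
      (integrable_of_abs_le (hmeas i hi) (hD i hi))).const_mul _).const_mul _
  have hexpY : ∀ i ∈ s, ∀ σ, Integrable (fun X => exp (l * Y i σ X)) (Measure.pi fun _ => ρ) := by
    intro i hi σ
    simp only [hlY, exp_mul_sum_boolSign_mul]
    exact Integrable.fintype_prod fun k => integrable_exp_mul_of_abs_le (hmeas i hi) (hD i hi) _
  have hmassart := exp_mul_integral_sum_mul_sup'_le (μ := Measure.pi fun _ => ρ)
    (w := fun _ : Fin n → Bool => (1 / 2 ^ n : ℝ)) (fun _ => by positivity)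
    (by simp) s hs hY hexpY
  have hcard : (0 : ℝ) < s.card := Nat.cast_pos.2 hs.card_pos
  have hlog : l * ∫ X : Fin n → 𝒳, empiricalRademacher s hs g X ∂(Measure.pi fun _ => ρ)
      ≤ log s.card + l ^ 2 * r / n := by
    rw [← log_exp (l * _), ← log_exp (l ^ 2 * r / n), ← log_mul hcard.ne' (exp_pos _).ne']
    refine log_le_log (exp_pos _) ?_
    calc _ = _ := by simp only [empiricalRademacher, mul_sum (a := (1 / 2 ^ n : ℝ))]; rfl
      _ ≤ _ := hmassart
      _ ≤ ∑ i ∈ s, exp (l ^ 2 * r / n) := sum_le_sum fun i hi =>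
          sum_integral_exp_mul_rademacher_le ρ (hmeas i hi) (hD i hi) (hr i hi) hn
            (by rwa [abs_of_pos hl])
      _ = s.card * exp (l ^ 2 * r / n) := by rw [sum_const, nsmul_eq_mul]
  refine ((le_div_iff₀' hl).2 hlog).trans_eq ?_
  field_simp

end

lemma le_two_mul_max_of_forall_le {a L r D m : ℝ} (hL : 0 ≤ L) (hD : 0 < D)
    (hm : 0 < m) (h : ∀ l, 0 < l → l * D ≤ m → a ≤ L / l + l * r / m) :
    a ≤ 2 * max √(r * L / m) (D * L / m) := by
  rcases hL.eq_or_lt with rfl | hL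
  · -- let `l → 0⁺`
    simp only [mul_zero, zero_div, sqrt_zero, max_self]
    have hlim : Tendsto (fun l => 0 / l + l * r / m) (𝓝[>] 0) (𝓝 0) := by
      simpa using (((continuous_mul_const r).div_const m).tendsto 0).mono_left
        nhdsWithin_le_nhds
    refine ge_of_tendsto hlim (mem_of_superset (Ioo_mem_nhdsGT (div_pos hm hD)) ?_)
    exact fun l hl => h l hl.1 ((lt_div_iff₀ hD).1 hl.2).le
  by_cases hcase : D ^ 2 * L ≤ m * r
  · have hr : 0 < r := pos_of_mul_pos_right ((by positivity : 0 < D ^ 2 * L).trans_le hcase) hm.le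
    have hDL : D * L / m ≤ √(r * L / m) := by
      rw [le_sqrt (by positivity) (by positivity), div_pow, div_le_div_iff₀ (by positivity) hm]
      nlinarith [mul_le_mul_of_nonneg_left hcase (by positivity : 0 ≤ L * m)]
    have hq2 : √(r * L / m) ^ 2 * m = r * L := by
      rw [sq_sqrt (by positivity), div_mul_cancel₀ _ hm.ne']
    have hq : 0 < √(r * L / m) := by positivity
    generalize √(r * L / m) = q at *
    calc a ≤ L / (L / q) + L / q * r / m := by
          refine h _ (by positivity) ?_
          rw [div_le_iff₀ hm] at hDL
          rw [div_mul_eq_mul_div, div_le_iff₀ hq]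
          linarith
      _ = 2 * q := by
          rw [div_div_cancel₀ hL.ne', div_mul_eq_mul_div, div_div, div_eq_of_eq_mul (by positivity)]
          · ring
          · nlinarith
      _ ≤ 2 * max q (D * L / m) := by gcongr; exact le_max_left _ _
  · have hrD : r / D ≤ D * L / m := by
      rw [div_le_div_iff₀ hD hm]
      nlinarith
    calc a ≤ L / (m / D) + m / D * r / m := h _ (by positivity) (div_mul_cancel₀ _ hD.ne').le
      _ = D * L / m + r / D := by field_simp
      _ ≤ 2 * max √(r * L / m) (D * L / m) := by
          have := le_max_right √(r * L / m) (D * L / m)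
          linarith

def IsSubRoot_s17 (ψ : ℝ → ℝ) : Prop :=
  (∀ r, 0 ≤ r → 0 ≤ ψ r) ∧ MonotoneOn ψ (Set.Ici 0) ∧
    AntitoneOn (fun r => ψ r / √r) (Set.Ioi 0)

lemma isSubRoot_two_mul_max_sqrt {L m b : ℝ} (hL : 0 ≤ L) (hm : 0 ≤ m) (hb : 0 ≤ b) :
    IsSubRoot_s17 fun r => 2 * max √(r * L / m) b := by
  refine ⟨fun r _ => by positivity, fun r _ s _ hrs => ?_, fun r hr s hs hrs => ?_⟩
  · dsimp only
    gcongr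
  · have hdiv : ∀ t, 0 < t → 2 * max √(t * L / m) b / √t = 2 * max √(L / m) (b / √t) := by
      intro t ht
      rw [mul_div_assoc, ← max_div_div_right (sqrt_nonneg t), mul_div_assoc,
        sqrt_mul ht.le, mul_div_cancel_left₀ _ (sqrt_pos.2 ht).ne']
    dsimp only
    rw [hdiv r hr, hdiv s hs]
    gcongr
    exact sqrt_pos.2 hr

lemma two_mul_max_sqrt_eq_self {D L m : ℝ} (hL : 0 ≤ L) (hm : 0 ≤ m) :
    2 * max √(2 * max D 2 * L / m * L / m) (D * L / m) = 2 * max D 2 * L / m := by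
  set M := max D 2
  have hc : 0 ≤ L / m := div_nonneg hL hm
  have hM : max √(2 * M) D = M := by
    refine le_antisymm (max_le ?_ (le_max_left _ _)) ?_
    · rw [sqrt_le_left (by positivity)]
      nlinarith [le_max_right D 2]
    · rcases le_total 2 D with hD | hD
      · simp [M, hD]
      · simp only [M, max_eq_right hD]
        rw [show (2 : ℝ) * 2 = 2 ^ 2 by norm_num, sqrt_sq zero_le_two]
        exact le_max_left _ _
  rw [show 2 * M * L / m * L / m = 2 * M * (L / m) ^ 2 by ring, sqrt_mul' _ (sq_nonneg _),
    sqrt_sq hc, mul_div_assoc D, ← max_mul_of_nonneg _ _ hc, hM]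
  ring

lemma csSup_setOf_exists_mem_filter {α : Type*} (s : Finset α) (p : α → Prop) [DecidablePred p]
    (φ : α → ℝ) (h : (s.filter p).Nonempty) :
    sSup {v | ∃ a ∈ s, p a ∧ v = φ a} = (s.filter p).sup' h φ := by
  rw [Finset.sup'_eq_csSup_image]
  congr 1
  ext v
  simp [and_assoc, eq_comm]

theorem local_rademacher_finite_class_general {𝒳 : Type*} [MeasurableSpace 𝒳]
    (ρ : Measure 𝒳) [IsProbabilityMeasure ρ]
    (F : Finset (𝒳 → ℝ)) (D : ℝ) (hD : 0 < D)
    (hmeas : ∀ f ∈ F, Measurable f)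
    (hrange : ∀ f ∈ F, ∀ x, f x ∈ Set.Icc 0 D)
    (f₀ : 𝒳 → ℝ) (hf₀ : f₀ ∈ F)
    (n : ℕ) (hn : 0 < n) :
    (∀ r : ℝ, 0 ≤ r →
      (∫ X : Fin n → 𝒳, ((1 / 2 ^ n : ℝ) * ∑ σ : Fin n → Bool,
          sSup {v : ℝ | ∃ f ∈ F, (∫ x, (f x - f₀ x) ^ 2 ∂ρ) ≤ r ∧
            v = (1 / n : ℝ) * ∑ i, (if σ i then (1 : ℝ) else -1) * f (X i)})
        ∂(Measure.pi fun _ => ρ))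
      ≤ 2 * max (Real.sqrt (r * Real.log F.card / n)) (D * Real.log F.card / n)) ∧
    (∀ r, 0 ≤ r →
      0 ≤ 2 * max (Real.sqrt (r * Real.log F.card / n)) (D * Real.log F.card / n)) ∧
    MonotoneOn
      (fun r => 2 * max (Real.sqrt (r * Real.log F.card / n)) (D * Real.log F.card / n))
      (Set.Ici 0) ∧
    AntitoneOn
      (fun r => (2 * max (Real.sqrt (r * Real.log F.card / n))
          (D * Real.log F.card / n)) / Real.sqrt r)
      (Set.Ioi 0) ∧
    (2 * max (Real.sqrt ((2 * max D 2 * Real.log F.card / n) * Real.log F.card / n))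
        (D * Real.log F.card / n)
      = 2 * max D 2 * Real.log F.card / n) := by
  classical
  have hL : 0 ≤ log F.card := log_natCast_nonneg _
  have hn' : (0 : ℝ) < n := Nat.cast_pos.2 hn
  obtain ⟨hnonneg, hmono, hanti⟩ :=
    isSubRoot_two_mul_max_sqrt hL hn'.le (by positivity : 0 ≤ D * log F.card / n)
  refine ⟨fun r hr => ?_, hnonneg, hmono, hanti, two_mul_max_sqrt_eq_self hL hn'.le⟩
  set Fr := F.filter fun f => ∫ x, (f x - f₀ x) ^ 2 ∂ρ ≤ r
  have hFr : Fr.Nonempty := ⟨f₀, mem_filter.2 ⟨hf₀, by simpa using hr⟩⟩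
  calc _ = ∫ X, empiricalRademacher Fr hFr (fun f x => f x - f₀ x) X ∂(Measure.pi fun _ => ρ) := by
        refine integral_congr_ae (ae_of_all _ fun X => ?_)
        rw [empiricalRademacher_sub]
        simp only [csSup_setOf_exists_mem_filter F _ _ hFr]
        rfl
    _ ≤ _ := le_two_mul_max_of_forall_le hL hD hn' fun l hl hlD => ?_
  have hFrF : Fr ⊆ F := filter_subset _ _
  calc _ ≤ log Fr.card / l + l * r / n :=
        integral_empiricalRademacher_le ρ Fr hFr
          (fun f hf => (hmeas f (hFrF hf)).sub (hmeas f₀ hf₀))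
          (fun f hf x => abs_sub_le_of_nonneg_of_le (hrange f (hFrF hf) x).1
            (hrange f (hFrF hf) x).2 (hrange f₀ hf₀ x).1 (hrange f₀ hf₀ x).2)
          (fun f hf => (mem_filter.1 hf).2) hn hl hlD
    _ ≤ log F.card / l + l * r / n := by
        gcongr

theorem local_rademacher_finite_class {𝒳 : Type*} [MeasurableSpace 𝒳]
    (ρ : Measure 𝒳) [IsProbabilityMeasure ρ]
    (F : Finset (𝒳 → ℝ)) (hF : F.Nonempty) (D : ℝ) (hD : 0 < D)
    (hmeas : ∀ f ∈ F, Measurable f)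
    (hrange : ∀ f ∈ F, ∀ x, f x ∈ Set.Icc 0 D)
    (f₀ : 𝒳 → ℝ) (hf₀ : f₀ ∈ F)
    (n : ℕ) (hn : 0 < n) :
    (∀ r : ℝ, 0 ≤ r →
      (∫ X : Fin n → 𝒳, ((1 / 2 ^ n : ℝ) * ∑ σ : Fin n → Bool,
          sSup {v : ℝ | ∃ f ∈ F, (∫ x, (f x - f₀ x) ^ 2 ∂ρ) ≤ r ∧
            v = (1 / n : ℝ) * ∑ i, (if σ i then (1 : ℝ) else -1) * f (X i)})
        ∂(Measure.pi fun _ => ρ))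
      ≤ 2 * max (Real.sqrt (r * Real.log F.card / n)) (D * Real.log F.card / n)) ∧
    (∀ r, 0 ≤ r →
      0 ≤ 2 * max (Real.sqrt (r * Real.log F.card / n)) (D * Real.log F.card / n)) ∧
    MonotoneOn
      (fun r => 2 * max (Real.sqrt (r * Real.log F.card / n)) (D * Real.log F.card / n))
      (Set.Ici 0) ∧
    AntitoneOn
      (fun r => (2 * max (Real.sqrt (r * Real.log F.card / n))
          (D * Real.log F.card / n)) / Real.sqrt r)
      (Set.Ioi 0) ∧
    (2 * max (Real.sqrt ((2 * max D 2 * Real.log F.card / n) * Real.log F.card / n))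
        (D * Real.log F.card / n)
      = 2 * max D 2 * Real.log F.card / n) :=
  local_rademacher_finite_class_general ρ F D hD hmeas hrange f₀ hf₀ n hn
end
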